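/- Let G = (V, E) and G' = (V, E') differ in a single edge (a,b) with π(a) < π(b), and let A be the set of vertices whose eliminator differs between LFMIS(G, π) and LFMIS(G', π), and F ⊆ A the set of vertices belonging to exactly one of the two maximal independent sets. Then every v ∈ A with v ≠ b has a neighbor u (in G or G') with π(u) < π(v) and u ∈ F. -/

import Mathlib

/-!
Since `v ≠ b` and `π a < π b`, the edges from `v` to vertices of lower rank are the same in `G`
and `G'`. Of the two eliminators of `v`, the one of smaller rank, say the `G`-eliminator `e`, is
then a lower neighbour of `v` in both graphs; it lies in `LFMIS(G)`, and it cannot lie in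
`LFMIS(G')`, where it would undercut the `G'`-eliminator.
-/

open scoped Classical

variable {V : Type*}

/-- The lexicographically first maximal independent set under ranking `π`:
`v` is in the LFMIS iff no neighbor of strictly smaller rank is in the LFMIS. -/
noncomputable def lfmis [Fintype V] (G : SimpleGraph V) (π : V → ℝ) : V → Prop :=
  fun v => ∀ u, G.Adj u v → π u < π v → ¬ lfmis G π u
termination_by v => (Finset.univ.filter fun u => π u < π v).card
decreasing_by
  rename_i u _ hlt
  apply Finset.card_lt_card
  constructor
  · intro w hw
    simp only [Finset.mem_filter, Finset.mem_univ, true_and] at hw ⊢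
    exact hw.trans hlt
  · intro hsub
    have := hsub (Finset.mem_filter.mpr ⟨Finset.mem_univ u, hlt⟩)
    simp only [Finset.mem_filter, Finset.mem_univ, true_and] at this
    exact lt_irrefl _ this

/-- The eliminator of `v`: the minimum-rank vertex of `(N(v) ∪ {v}) ∩ LFMIS(G, π)`
(when it exists; otherwise `v` by convention). -/
noncomputable def eliminator [Fintype V] (G : SimpleGraph V) (π : V → ℝ) (v : V) : V :=
  if h : ∃ e, (e = v ∨ G.Adj e v) ∧ lfmis G π e ∧
      ∀ u, (u = v ∨ G.Adj u v) → lfmis G π u → π e ≤ π u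
  then h.choose else v

section Eliminator

variable [Fintype V] (G : SimpleGraph V) (π : V → ℝ) (v : V)

lemma lfmis_iff : lfmis G π v ↔ ∀ u, G.Adj u v → π u < π v → ¬ lfmis G π u := by
  rw [lfmis]

lemma exists_lfmis_closedNbhd : ∃ u, (u = v ∨ G.Adj u v) ∧ π u ≤ π v ∧ lfmis G π u := by
  by_cases hv : lfmis G π v
  · exact ⟨v, Or.inl rfl, le_rfl, hv⟩
  · rw [lfmis_iff] at hv
    push Not at hv
    obtain ⟨u, hadj, hlt, hu⟩ := hv
    exact ⟨u, Or.inr hadj, hlt.le, hu⟩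

lemma exists_min_lfmis_closedNbhd :
    ∃ e, (e = v ∨ G.Adj e v) ∧ lfmis G π e ∧
      ∀ u, (u = v ∨ G.Adj u v) → lfmis G π u → π e ≤ π u := by
  let S : Finset V := {e | (e = v ∨ G.Adj e v) ∧ lfmis G π e}
  obtain ⟨u, hu, -, hlu⟩ := exists_lfmis_closedNbhd G π v
  obtain ⟨e, heS, hmin⟩ := S.exists_min_image π ⟨u, by simp [S, hu, hlu]⟩
  simp only [S, Finset.mem_filter, Finset.mem_univ, true_and] at heS
  exact ⟨e, heS.1, heS.2, fun u hu hlu => hmin u (by simp [S, hu, hlu])⟩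

lemma eliminator_spec :
    (eliminator G π v = v ∨ G.Adj (eliminator G π v) v) ∧ lfmis G π (eliminator G π v) ∧
      ∀ u, (u = v ∨ G.Adj u v) → lfmis G π u → π (eliminator G π v) ≤ π u := by
  rw [eliminator, dif_pos (exists_min_lfmis_closedNbhd G π v)]
  exact (exists_min_lfmis_closedNbhd G π v).choose_spec

lemma eliminator_le : π (eliminator G π v) ≤ π v := by
  obtain ⟨u, hu, huv, hlu⟩ := exists_lfmis_closedNbhd G π v
  exact ((eliminator_spec G π v).2.2 u hu hlu).trans huv

lemma exists_flipped_of_eliminator_lt (G' : SimpleGraph V)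
    (hagree : ∀ u, π u < π v → (G.Adj u v ↔ G'.Adj u v))
    (hlt : π (eliminator G π v) < π (eliminator G' π v)) :
    ∃ u, G.Adj u v ∧ π u < π v ∧ lfmis G π u ∧ ¬ lfmis G' π u := by
  set e := eliminator G π v
  obtain ⟨hev, hle, -⟩ := eliminator_spec G π v
  have hltv : π e < π v := hlt.trans_le (eliminator_le G' π v)
  have hadj : G.Adj e v := hev.resolve_left fun h => hltv.ne (congrArg π h)
  refine ⟨e, hadj, hltv, hle, fun hle' => ?_⟩
  exact hlt.not_ge ((eliminator_spec G' π v).2.2 e (Or.inr ((hagree e hltv).mp hadj)) hle')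

end Eliminator

lemma adj_iff_adj_of_ne_edge {G G' : SimpleGraph V} {a b : V}
    (hdiff :
      (∀ u w, G'.Adj u w ↔ (G.Adj u w ∨ (u = a ∧ w = b) ∨ (u = b ∧ w = a))) ∨
      (∀ u w, G'.Adj u w ↔ (G.Adj u w ∧ ¬ ((u = a ∧ w = b) ∨ (u = b ∧ w = a)))))
    {u w : V} (huw : ¬ ((u = a ∧ w = b) ∨ (u = b ∧ w = a))) :
    G.Adj u w ↔ G'.Adj u w := by
  rcases hdiff with hd | hd <;> simp [hd u w, huw]

/-- If `G` and `G'` differ in the single edge `(a,b)` with `π a < π b`, then every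
affected vertex `v ≠ b` (a vertex whose eliminator differs between the two LFMIS's)
has a neighbor `u` of smaller rank that is flipped, i.e. belongs to exactly one of
the two maximal independent sets. -/
theorem affected_has_flipped_neighbor [Fintype V] (G G' : SimpleGraph V) (π : V → ℝ)
    (hπ : Function.Injective π) (a b : V) (hab : π a < π b)
    (hdiff :
      (∀ u w, G'.Adj u w ↔ (G.Adj u w ∨ (u = a ∧ w = b) ∨ (u = b ∧ w = a))) ∨
      (∀ u w, G'.Adj u w ↔ (G.Adj u w ∧ ¬ ((u = a ∧ w = b) ∨ (u = b ∧ w = a))))) :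
    ∀ v, eliminator G π v ≠ eliminator G' π v → v ≠ b →
      ∃ u, (G.Adj u v ∨ G'.Adj u v) ∧ π u < π v ∧
        ¬ (lfmis G π u ↔ lfmis G' π u) := by
  intro v hne hvb
  have hagree : ∀ u, π u < π v → (G.Adj u v ↔ G'.Adj u v) := by
    refine fun u huv => adj_iff_adj_of_ne_edge hdiff ?_
    rintro (⟨-, rfl⟩ | ⟨rfl, rfl⟩)
    exacts [hvb rfl, huv.not_gt hab]
  rcases (hπ.ne hne).lt_or_gt with hlt | hlt
  · obtain ⟨u, hadj, huv, hl, hl'⟩ := exists_flipped_of_eliminator_lt G π v G' hagree hlt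
    exact ⟨u, Or.inl hadj, huv, fun h => hl' (h.mp hl)⟩
  · obtain ⟨u, hadj, huv, hl', hl⟩ :=
      exists_flipped_of_eliminator_lt G' π v G (fun u hu => (hagree u hu).symm) hlt
    exact ⟨u, Or.inr hadj, huv, fun h => hl (h.mpr hl')⟩
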